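/- Assume f \in C^1([0,\infty)) satisfies, for some \gamma > 0: f(u) < 0 for u \in (0,\gamma) and f(u) > 0 for u > \gamma. Let u be a positive solution of the one-dimensional problem (1), and let x_0 \in (0,1) be a point with u(x_0) = \gamma. Define q(x) = (p-1)(1-x)\,\varphi_p(u'(x)) + \varphi_p'(u'(x))\,u(x). Then q(x_0) < 0. -/

import Mathlib

open Set

/-- `φ_p(t) = t |t|^{p-2}` (real exponent), with `φ_p(0)=0`. -/
noncomputable def phi (p t : ℝ) : ℝ := t * |t| ^ (p - 2)

/-- `φ_p'(t) = (p-1) |t|^{p-2}`. -/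
noncomputable def phi' (p t : ℝ) : ℝ := (p - 1) * |t| ^ (p - 2)

/-- The derivative of a function on `[-1,1]` (one-sided at the endpoints). -/
noncomputable def du (u : ℝ → ℝ) : ℝ → ℝ := derivWithin u (Set.Icc (-1) 1)

/-- A positive (classical) solution of the one-dimensional problem (1):
`(φ_p(u'))' + λ f(u) = 0` on `(-1,1)`, `u(-1) = u(1) = 0`,
with `u ∈ C^1[-1,1]`, `φ_p ∘ u' ∈ C^1((-1,1))`, and `u > 0` on `(-1,1)`. -/
structure Sol1D (p lam : ℝ) (f : ℝ → ℝ) (u : ℝ → ℝ) : Prop where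
  reg : ContDiffOn ℝ 1 u (Set.Icc (-1) 1)
  reg' : ContDiffOn ℝ 1 (fun x => phi p (du u x)) (Set.Ioo (-1) 1)
  pos : ∀ x ∈ Set.Ioo (-1:ℝ) 1, 0 < u x
  bcm : u (-1) = 0
  bc1 : u 1 = 0
  ode : ∀ x ∈ Set.Ioo (-1:ℝ) 1,
    deriv (fun y => phi p (du u y)) x + lam * f (u x) = 0

/-- A solution of the linearized problem (4) at `u`:
`(φ_p'(u') w')' + λ f'(u) w = 0` on `(-1,1)`, `w(-1) = w(1) = 0`. -/
structure Lin1D (p lam : ℝ) (f : ℝ → ℝ) (u w : ℝ → ℝ) : Prop where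
  reg : ContDiffOn ℝ 1 w (Set.Icc (-1) 1)
  reg' : ContDiffOn ℝ 1 (fun x => phi' p (du u x) * du w x) (Set.Ioo (-1) 1)
  ode : ∀ x ∈ Set.Ioo (-1:ℝ) 1,
    deriv (fun y => phi' p (du u y) * du w y) x + lam * deriv f (u x) * w x = 0
  bcm : w (-1) = 0
  bc1 : w 1 = 0

/-!
With `F` a primitive of `f`, the energy `E = (p-1)/p |u'|^p + λ F(u)` is a first integral of the
equation, and letting `x → 1` gives `E ≥ λ F(0) > λ F(s)` for `0 < s ≤ γ`. Hence `u'` never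
vanishes where `u ≤ γ`, and `q(x₀) = φ_p'(u'(x₀)) ((1 - x₀) u'(x₀) + γ)` with `φ_p'(u'(x₀)) > 0`.

If `u'(x₀) < 0`, then `u < γ` on `(x₀, 1)`, where `f(u) < 0` makes `φ_p(u')` increase, so
`u'(x₀)` lies below the secant slope `-γ / (1 - x₀)`.

If `u'(x₀) > 0`, then `u < γ` on `(-1, x₀)`; let `x₁ ≥ x₀` be the last point where `u = γ`.
On both branches `|u'| = g(u)` for one and the same positive `g`, so the time map `∫ ds / g(s)`
shows that `[x₁, 1]` is at least as long as `[-1, x₀]`, i.e. `x₀ + x₁ ≤ 0`: impossible.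
-/

open Filter Topology

theorem phi_neg (p t : ℝ) : phi p (-t) = -phi p t := by
  simp [phi]

theorem phi_of_nonneg {p t : ℝ} (hp : p ≠ 1) (ht : 0 ≤ t) : phi p t = t ^ (p - 1) := by
  rcases ht.eq_or_lt with rfl | ht
  · simp [phi, Real.zero_rpow (sub_ne_zero.2 hp)]
  · rw [phi, abs_of_pos ht, mul_comm, ← Real.rpow_add_one ht.ne']
    ring_nf

theorem abs_phi (p t : ℝ) : |phi p t| = phi p |t| := by
  rw [phi, phi, abs_mul, abs_abs, abs_of_nonneg (Real.rpow_nonneg (abs_nonneg t) _)]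

theorem phi_strictMono {p : ℝ} (hp : 1 < p) : StrictMono (phi p) :=
  strictMono_of_odd_strictMonoOn_nonneg (phi_neg p) fun a ha b hb hab => by
    rw [phi_of_nonneg hp.ne' ha, phi_of_nonneg hp.ne' hb]
    exact Real.rpow_lt_rpow ha hab (by linarith)

theorem abs_phi_rpow_conj {p : ℝ} (hp : p ≠ 1) (t : ℝ) :
    |phi p t| ^ (p / (p - 1)) = |t| ^ p := by
  rw [abs_phi, phi_of_nonneg hp (abs_nonneg t), ← Real.rpow_mul (abs_nonneg t),
    mul_div_cancel₀ _ (sub_ne_zero.2 hp)]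

theorem phi_conj_phi {p : ℝ} (hp : p ≠ 1) (t : ℝ) : phi (p / (p - 1)) (phi p t) = t := by
  rcases eq_or_ne t 0 with rfl | ht
  · simp [phi]
  have hexp : p - 2 + (p - 1) * (p / (p - 1) - 2) = 0 := by
    field_simp [sub_ne_zero.2 hp]
    ring
  rw [phi, abs_phi, phi_of_nonneg hp (abs_nonneg t), ← Real.rpow_mul (abs_nonneg t), phi,
    mul_assoc, ← Real.rpow_add (abs_pos.2 ht), hexp, Real.rpow_zero, mul_one]

theorem phi'_pos {p t : ℝ} (hp : 1 < p) (ht : t ≠ 0) : 0 < phi' p t :=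
  mul_pos (by linarith) (Real.rpow_pos_of_pos (abs_pos.2 ht) _)

theorem mul_phi_add_phi'_mul (p c t γ : ℝ) :
    (p - 1) * c * phi p t + phi' p t * γ = phi' p t * (c * t + γ) := by
  simp only [phi, phi']
  ring

theorem HasDerivAt.eventually_nhdsGT_lt {u : ℝ → ℝ} {d a : ℝ} (h : HasDerivAt u d a)
    (hd : d < 0) : ∀ᶠ y in 𝓝[>] a, u y < u a := by
  have hs := (hasDerivAt_iff_tendsto_slope.1 h).mono_left
    (nhdsWithin_mono a fun y (hy : a < y) => hy.ne')
  filter_upwards [hs.eventually (gt_mem_nhds hd), self_mem_nhdsWithin] with y hy hay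
  rw [slope_def_field, div_neg_iff] at hy
  rcases hy with ⟨_, h⟩ | ⟨h, _⟩ <;> linarith [show a < y from hay]

theorem HasDerivAt.eventually_nhdsLT_lt {u : ℝ → ℝ} {d a : ℝ} (h : HasDerivAt u d a)
    (hd : 0 < d) : ∀ᶠ y in 𝓝[<] a, u y < u a := by
  have hs := (hasDerivAt_iff_tendsto_slope.1 h).mono_left
    (nhdsWithin_mono a fun y (hy : y < a) => hy.ne)
  filter_upwards [hs.eventually (lt_mem_nhds hd), self_mem_nhdsWithin] with y hy hya
  rw [slope_def_field, div_pos_iff] at hy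
  rcases hy with ⟨_, h⟩ | ⟨h, _⟩ <;> linarith [show y < a from hya]

theorem le_of_no_critical_point_below {u u' : ℝ → ℝ} {a b γ : ℝ}
    (hu : ContinuousOn u (Icc a b)) (hu' : ∀ x ∈ Ioo a b, HasDerivAt u (u' x) x)
    (hcrit : ∀ x ∈ Ioo a b, u x < γ → u' x ≠ 0) (ha : γ ≤ u a) (hb : γ ≤ u b) :
    ∀ x ∈ Icc a b, γ ≤ u x := by
  intro x hx
  obtain ⟨m, hm, hmin⟩ := isCompact_Icc.exists_isMinOn ⟨x, hx⟩ hu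
  refine le_trans ?_ (isMinOn_iff.1 hmin x hx)
  by_contra! hlt
  have hma : m ≠ a := by rintro rfl; linarith
  have hmb : m ≠ b := by rintro rfl; linarith
  have hmI : m ∈ Ioo a b := ⟨lt_of_le_of_ne hm.1 hma.symm, lt_of_le_of_ne hm.2 hmb⟩
  exact hcrit m hmI hlt
    ((hmin.isLocalMin (Icc_mem_nhds hmI.1 hmI.2)).hasDerivAt_eq_zero (hu' m hmI))

theorem exists_last_eq {u : ℝ → ℝ} {a b γ : ℝ} (hab : a ≤ b) (hu : ContinuousOn u (Icc a b))
    (ha : u a = γ) (hb : u b < γ) : ∃ c ∈ Ico a b, u c = γ ∧ ∀ x ∈ Ioc c b, u x < γ := by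
  set T := Icc a b ∩ u ⁻¹' {γ}
  have hT : IsClosed T := hu.preimage_isClosed_of_isClosed isClosed_Icc isClosed_singleton
  have hTbdd : BddAbove T := ⟨b, fun x hx => hx.1.2⟩
  have hcT : sSup T ∈ T := hT.csSup_mem ⟨a, left_mem_Icc.2 hab, ha⟩ hTbdd
  refine ⟨sSup T, ⟨hcT.1.1, lt_of_le_of_ne hcT.1.2 fun h => ?_⟩, hcT.2, fun x hx => ?_⟩
  · exact hb.ne (h ▸ hcT.2)
  · by_contra! hge
    obtain ⟨d, hd, hud⟩ := intermediate_value_Icc' hx.2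
      (hu.mono (Icc_subset_Icc (hcT.1.1.trans hx.1.le) le_rfl)) ⟨hb.le, hge⟩
    have hdT : d ∈ T := ⟨⟨hcT.1.1.trans (hx.1.le.trans hd.1), hd.2⟩, hud⟩
    exact (le_csSup hTbdd hdT).not_gt (hx.1.trans_le hd.1)

theorem IsPreconnected.forall_pos_of_ne_zero {X : Type*} [TopologicalSpace X] {s : Set X}
    {g : X → ℝ} (hs : IsPreconnected s) (hg : ContinuousOn g s) (hne : ∀ x ∈ s, g x ≠ 0)
    {a : X} (ha : a ∈ s) (hga : 0 < g a) : ∀ x ∈ s, 0 < g x := by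
  intro x hx
  by_contra! h
  obtain ⟨y, hy, hy0⟩ := hs.intermediate_value hx ha hg ⟨h, hga.le⟩
  exact hne y hy hy0

theorem sub_eq_mul_of_hasDerivAt {φ : ℝ → ℝ} {a b c : ℝ} (hab : a ≤ b)
    (hd : ∀ x ∈ Icc a b, HasDerivAt φ c x) : φ b - φ a = c * (b - a) := by
  rcases hab.eq_or_lt with rfl | hlt
  · simp
  obtain ⟨ξ, -, hξ⟩ := exists_hasDerivAt_eq_slope φ (fun _ => c) hlt
    (fun x hx => (hd x hx).continuousAt.continuousWithinAt)
    (fun x hx => hd x (Ioo_subset_Icc_self hx))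
  rw [hξ, div_mul_cancel₀ _ (sub_ne_zero.2 hlt.ne')]

theorem hasDerivAt_integral_of_continuousOn {h : ℝ → ℝ} {U : Set ℝ} {c s : ℝ}
    (hcs : ContinuousOn h (uIcc c s)) (hU : IsOpen U) (hs : s ∈ U) (hh : ContinuousOn h U) :
    HasDerivAt (fun r => ∫ t in c..r, h t) (h s) s :=
  intervalIntegral.integral_hasDerivAt_right hcs.intervalIntegrable
    (hh.stronglyMeasurableAtFilter hU s hs) (hh.continuousAt (hU.mem_nhds hs))

theorem continuousWithinAt_integral_zero {f : ℝ → ℝ} (hf : ContinuousOn f (Ici 0)) :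
    ContinuousWithinAt (fun s => ∫ t in (0 : ℝ)..s, f t) (Ici 0) 0 := by
  have hint : MeasureTheory.IntegrableOn f (uIcc 0 1) :=
    (hf.mono fun t ht => (uIcc_of_le (zero_le_one' ℝ) ▸ ht).1).integrableOn_compact isCompact_uIcc
  have h := intervalIntegral.continuousOn_primitive_interval hint 0 left_mem_uIcc
  rw [uIcc_of_le zero_le_one] at h
  exact h.mono_of_mem_nhdsWithin (Icc_mem_nhdsGE zero_lt_one)

theorem intervalIntegral_neg_of_neg_on {f : ℝ → ℝ} {a b : ℝ}
    (hf : IntervalIntegrable f MeasureTheory.volume a b) (hneg : ∀ x ∈ Ioo a b, f x < 0)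
    (hab : a < b) : ∫ x in a..b, f x < 0 := by
  have := intervalIntegral.intervalIntegral_pos_of_pos_on hf.neg
    (fun x hx => neg_pos.2 (hneg x hx)) hab
  rwa [Pi.neg_def, intervalIntegral.integral_neg, neg_pos] at this

noncomputable def energy (p lam : ℝ) (F u : ℝ → ℝ) (x : ℝ) : ℝ :=
  (p - 1) / p * |du u x| ^ p + lam * F (u x)

namespace Sol1D

variable {p lam γ : ℝ} {f F u : ℝ → ℝ}

theorem hasDerivAt {x : ℝ} (hu : Sol1D p lam f u) (hx : x ∈ Ioo (-1) 1) :
    HasDerivAt u (du u x) x :=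
  ((hu.reg.differentiableOn one_ne_zero) x (Ioo_subset_Icc_self hx)).hasDerivWithinAt.hasDerivAt
    (Icc_mem_nhds hx.1 hx.2)

theorem continuousOn_du (hu : Sol1D p lam f u) : ContinuousOn (du u) (Icc (-1) 1) :=
  hu.reg.continuousOn_derivWithin (uniqueDiffOn_Icc (by norm_num)) le_rfl

theorem hasDerivAt_phi_du {x : ℝ} (hu : Sol1D p lam f u) (hx : x ∈ Ioo (-1) 1) :
    HasDerivAt (fun y => phi p (du u y)) (-(lam * f (u x))) x := by
  have h := (((hu.reg'.differentiableOn one_ne_zero) x hx).differentiableAt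
    (isOpen_Ioo.mem_nhds hx)).hasDerivAt
  rwa [eq_neg_of_add_eq_zero_left (hu.ode x hx)] at h

/-- Only `φ_p(u')` is known to be differentiable, so the energy is differentiated in the form
`(p-1)/p |φ_p(u')|^{p'} + λ F(u)` with `p' = p / (p - 1)`. -/
theorem hasDerivAt_energy {x : ℝ} (hu : Sol1D p lam f u) (hp : 1 < p)
    (hFd : ∀ s > 0, HasDerivAt F (f s) s) (hx : x ∈ Ioo (-1) 1) :
    HasDerivAt (energy p lam F u) 0 x := by
  have hp1 : p - 1 ≠ 0 := by linarith
  have hq : 1 < p / (p - 1) := (one_lt_div (by linarith)).2 (by linarith)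
  have h1 := ((hasDerivAt_abs_rpow _ hq).comp x (hu.hasDerivAt_phi_du hx)).const_mul ((p - 1) / p)
  have h2 := ((hFd _ (hu.pos x hx)).comp x (hu.hasDerivAt hx)).const_mul lam
  have hinv := phi_conj_phi hp.ne' (du u x)
  have hpq : (p - 1) / p * (p / (p - 1)) = 1 := by field_simp
  rw [phi] at hinv
  set v := phi p (du u x)
  set w := |v| ^ (p / (p - 1) - 2)
  have hfun : energy p lam F u = fun y =>
      (p - 1) / p * ((fun s => |s| ^ (p / (p - 1))) ∘ fun y => phi p (du u y)) y
        + lam * (F ∘ u) y := by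
    funext y
    simp only [energy, Function.comp, abs_phi_rpow_conj hp.ne']
  rw [hfun]
  exact (h1.add h2).congr_deriv
    (by linear_combination -(lam * f (u x) * (v * w)) * hpq - lam * f (u x) * hinv)

theorem energy_eq {x y : ℝ} (hu : Sol1D p lam f u) (hp : 1 < p)
    (hFd : ∀ s > 0, HasDerivAt F (f s) s) (hx : x ∈ Ioo (-1) 1) (hy : y ∈ Ioo (-1) 1) :
    energy p lam F u x = energy p lam F u y :=
  isOpen_Ioo.is_const_of_deriv_eq_zero isPreconnected_Ioo
    (fun _ hz => (hu.hasDerivAt_energy hp hFd hz).differentiableAt.differentiableWithinAt)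
    (fun _ hz => (hu.hasDerivAt_energy hp hFd hz).deriv) hx hy

theorem energy_ge {x : ℝ} (hu : Sol1D p lam f u) (hp : 1 < p)
    (hFd : ∀ s > 0, HasDerivAt F (f s) s) (hF0 : ContinuousWithinAt F (Ici 0) 0)
    (hx : x ∈ Ioo (-1) 1) : lam * F 0 ≤ energy p lam F u x := by
  have hu1 : ContinuousWithinAt u (Ioo (-1) 1) 1 :=
    (hu.reg.continuousOn 1 ⟨by norm_num, le_rfl⟩).mono Ioo_subset_Icc_self
  have hFu : Tendsto (fun y => lam * F (u y)) (𝓝[<] 1) (𝓝 (lam * F 0)) := by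
    have := ((hF0.comp_of_eq hu1 (fun y hy => (hu.pos y hy).le) hu.bc1).tendsto).const_mul lam
    rwa [nhdsWithin_Ioo_eq_nhdsLT (by norm_num), Function.comp_apply, hu.bc1] at this
  refine le_of_tendsto hFu ?_
  filter_upwards [Ioo_mem_nhdsLT (show (-1 : ℝ) < 1 by norm_num)] with y hy
  rw [hu.energy_eq hp hFd hx hy, energy]
  have : 0 ≤ (p - 1) / p * |du u y| ^ p :=
    mul_nonneg (div_nonneg (by linarith) (by linarith)) (Real.rpow_nonneg (abs_nonneg _) _)
  linarith

theorem du_ne_zero {x₀ : ℝ} (hu : Sol1D p lam f u) (hp : 1 < p)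
    (hFd : ∀ s > 0, HasDerivAt F (f s) s) (hx₀ : x₀ ∈ Ioo (-1) 1)
    (hE : ∀ s ∈ Ioc 0 γ, lam * F s < energy p lam F u x₀) :
    ∀ x ∈ Ioo (-1) 1, u x ≤ γ → du u x ≠ 0 := by
  intro x hx hxγ h0
  have h : (p - 1) / p * |du u x| ^ p + lam * F (u x) = energy p lam F u x₀ :=
    hu.energy_eq hp hFd hx hx₀
  rw [h0, abs_zero, Real.zero_rpow (by linarith), mul_zero, zero_add] at h
  exact (hE (u x) ⟨hu.pos x hx, hxγ⟩).ne h

theorem abs_du_eq_rpow {x x₀ : ℝ} (hu : Sol1D p lam f u) (hp : 1 < p)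
    (hFd : ∀ s > 0, HasDerivAt F (f s) s) (hx : x ∈ Ioo (-1) 1) (hx₀ : x₀ ∈ Ioo (-1) 1) :
    |du u x| = (p / (p - 1) * (energy p lam F u x₀ - lam * F (u x))) ^ p⁻¹ := by
  have h : (p - 1) / p * |du u x| ^ p + lam * F (u x) = energy p lam F u x₀ :=
    hu.energy_eq hp hFd hx hx₀
  have hp1 : p - 1 ≠ 0 := by linarith
  have hpq : p / (p - 1) * ((p - 1) / p) = 1 := by field_simp
  rw [← h, add_sub_cancel_right, ← mul_assoc, hpq, one_mul,
    Real.rpow_rpow_inv (abs_nonneg _) (by linarith)]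

/-- By the energy identity `|u'| = g(u)` with `g(s) = (p/(p-1) (E - λ F(s)))^{1/p}`, positive on
`(0, γ]`; `G` is a primitive of `1/g` there. -/
theorem exists_timeMap {x₀ : ℝ} (hu : Sol1D p lam f u) (hp : 1 < p)
    (hFd : ∀ s > 0, HasDerivAt F (f s) s) (hx₀ : x₀ ∈ Ioo (-1) 1)
    (hE : ∀ s ∈ Ioc 0 γ, lam * F s < energy p lam F u x₀) :
    ∃ G : ℝ → ℝ, ∀ x ∈ Ioo (-1) 1, u x ≤ γ →
      HasDerivAt (fun y => G (u y)) (du u x / |du u x|) x := by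
  set E := energy p lam F u x₀
  set g : ℝ → ℝ := fun s => (p / (p - 1) * (E - lam * F s)) ^ p⁻¹
  set U := Ioi 0 ∩ (fun s => lam * F s) ⁻¹' Iio E
  have hFc : ContinuousOn F (Ioi 0) := fun s hs => (hFd s hs).continuousAt.continuousWithinAt
  have hU : IsOpen U := (continuousOn_const.mul hFc).isOpen_inter_preimage isOpen_Ioi isOpen_Iio
  have hgpos : ∀ s ∈ U, 0 < g s := fun s hs =>
    Real.rpow_pos_of_pos (mul_pos (div_pos (by linarith) (by linarith)) (sub_pos.2 hs.2)) _
  have hgc : ContinuousOn (fun s => (g s)⁻¹) U :=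
    (((continuousOn_const.mul (continuousOn_const.sub (continuousOn_const.mul hFc))).mono
      inter_subset_left).rpow_const fun _ _ => Or.inr (by positivity)).inv₀
      fun s hs => (hgpos s hs).ne'
  refine ⟨fun r => ∫ t in γ..r, (g t)⁻¹, fun x hx hxγ => ?_⟩
  have hsub : uIcc γ (u x) ⊆ U := by
    rw [uIcc_of_ge hxγ]
    exact fun s hs => ⟨(hu.pos x hx).trans_le hs.1, hE s ⟨(hu.pos x hx).trans_le hs.1, hs.2⟩⟩
  have hG := hasDerivAt_integral_of_continuousOn (hgc.mono hsub) hU (hsub right_mem_uIcc) hgc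
  exact (hG.comp x (hu.hasDerivAt hx)).congr_deriv
    (by rw [hu.abs_du_eq_rpow hp hFd hx hx₀, div_eq_inv_mul])

theorem lt_of_du_neg {a : ℝ} (hu : Sol1D p lam f u)
    (hcrit : ∀ x ∈ Ioo (-1) 1, u x ≤ γ → du u x ≠ 0) (ha : a ∈ Ioo (-1) 1) (hua : u a = γ)
    (hda : du u a < 0) : ∀ x ∈ Ioo a 1, u x < γ := by
  intro x hx
  by_contra! hge
  have hI : ∀ y ∈ Ioo a x, y ∈ Ioo (-1) 1 := fun y hy => ⟨ha.1.trans hy.1, hy.2.trans hx.2⟩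
  have hle := le_of_no_critical_point_below
    (hu.reg.continuousOn.mono (Icc_subset_Icc ha.1.le hx.2.le))
    (fun y hy => hu.hasDerivAt (hI y hy)) (fun y hy h => hcrit y (hI y hy) h.le) hua.ge hge
  obtain ⟨y, hy, hyI⟩ :=
    (((hu.hasDerivAt ha).eventually_nhdsGT_lt hda).and (Ioo_mem_nhdsGT hx.1)).exists
  linarith [hle y (Ioo_subset_Icc_self hyI)]

theorem lt_of_du_pos {a : ℝ} (hu : Sol1D p lam f u)
    (hcrit : ∀ x ∈ Ioo (-1) 1, u x ≤ γ → du u x ≠ 0) (ha : a ∈ Ioo (-1) 1) (hua : u a = γ)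
    (hda : 0 < du u a) : ∀ x ∈ Ioo (-1) a, u x < γ := by
  intro x hx
  by_contra! hge
  have hI : ∀ y ∈ Ioo x a, y ∈ Ioo (-1) 1 := fun y hy => ⟨hx.1.trans hy.1, hy.2.trans ha.2⟩
  have hle := le_of_no_critical_point_below
    (hu.reg.continuousOn.mono (Icc_subset_Icc hx.1.le ha.2.le))
    (fun y hy => hu.hasDerivAt (hI y hy)) (fun y hy h => hcrit y (hI y hy) h.le) hge hua.ge
  obtain ⟨y, hy, hyI⟩ :=
    (((hu.hasDerivAt ha).eventually_nhdsLT_lt hda).and (Ioo_mem_nhdsLT hx.2)).exists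
  linarith [hle y (Ioo_subset_Icc_self hyI)]

theorem exists_last_crossing {x₀ : ℝ} (hu : Sol1D p lam f u)
    (hcrit : ∀ x ∈ Ioo (-1) 1, u x ≤ γ → du u x ≠ 0) (hx₀ : x₀ ∈ Ioo (-1) 1)
    (hux₀ : u x₀ = γ) :
    ∃ x₁ ∈ Ico x₀ 1, u x₁ = γ ∧ du u x₁ < 0 ∧ ∀ x ∈ Ioo x₁ 1, u x < γ := by
  obtain ⟨x₁, hx₁, hux₁, hright⟩ := exists_last_eq hx₀.2.le
    (hu.reg.continuousOn.mono (Icc_subset_Icc hx₀.1.le le_rfl)) hux₀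
    (by rw [hu.bc1, ← hux₀]; exact hu.pos x₀ hx₀)
  have hx₁I : x₁ ∈ Ioo (-1) 1 := ⟨hx₀.1.trans_le hx₁.1, hx₁.2⟩
  refine ⟨x₁, hx₁, hux₁, ?_, fun x hx => hright x ⟨hx.1, hx.2.le⟩⟩
  refine (hcrit x₁ hx₁I hux₁.le).lt_or_gt.resolve_right fun hpos => ?_
  obtain ⟨y, hy, hyI⟩ := (((hu.hasDerivAt hx₁I).neg.eventually_nhdsGT_lt
    (neg_neg_of_pos hpos)).and (Ioo_mem_nhdsGT hx₁.2)).exists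
  linarith [hright y ⟨hyI.1, hyI.2.le⟩, show -u y < -u x₁ from hy]

/-- `1 + a ≤ 1 - b`: the branch rising from `0` to `γ` on `[-1, a]` is no longer than the branch
falling from `γ` to `0` on `[b, 1]`. -/
theorem add_nonpos_of_crossings {a b : ℝ} (hu : Sol1D p lam f u) (hp : 1 < p)
    (hFd : ∀ s > 0, HasDerivAt F (f s) s) (ha : a ∈ Ioo (-1) 1) (hb : b ∈ Ioo (-1) 1)
    (hE : ∀ s ∈ Ioc 0 γ, lam * F s < energy p lam F u a) (hua : u a = γ) (hub : u b = γ)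
    (hda : 0 < du u a) (hdb : du u b < 0) (hleft : ∀ x ∈ Ioo (-1) a, u x < γ)
    (hright : ∀ x ∈ Ioo b 1, u x < γ) : a + b ≤ 0 := by
  by_contra! hab
  obtain ⟨G, hG⟩ := hu.exists_timeMap hp hFd ha hE
  have hcrit := hu.du_ne_zero hp hFd ha hE
  set z := a + b - 1 with hz_def
  have hz : z ∈ Ioo (-1) a := ⟨by linarith, by linarith [hb.2]⟩
  have huz : u z ∈ Ioo 0 γ := ⟨hu.pos z ⟨hz.1, hz.2.trans ha.2⟩, hleft z hz⟩
  obtain ⟨c, hc, huc⟩ := intermediate_value_Icc' hb.2.le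
    (hu.reg.continuousOn.mono (Icc_subset_Icc hb.1.le le_rfl))
    (⟨hu.bc1 ▸ huz.1.le, hub ▸ huz.2.le⟩ : u z ∈ Icc (u 1) (u b))
  have hc1 : c < 1 := lt_of_le_of_ne hc.2 (by rintro rfl; linarith [hu.bc1, huz.1])
  have hleI : ∀ x ∈ Ioc (-1) a, x ∈ Ioo (-1) 1 ∧ u x ≤ γ := fun x hx =>
    ⟨⟨hx.1, hx.2.trans_lt ha.2⟩, hx.2.eq_or_lt.elim (fun h => h ▸ hua.le)
      fun h => (hleft x ⟨hx.1, h⟩).le⟩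
  have hriI : ∀ x ∈ Ico b 1, x ∈ Ioo (-1) 1 ∧ u x ≤ γ := fun x hx =>
    ⟨⟨hb.1.trans_le hx.1, hx.2⟩, hx.1.eq_or_lt.elim (fun h => h ▸ hub.le)
      fun h => (hright x ⟨h, hx.2⟩).le⟩
  have hpos := isPreconnected_Ioc.forall_pos_of_ne_zero (hu.continuousOn_du.mono
    fun x hx => Ioo_subset_Icc_self (hleI x hx).1) (fun x hx => hcrit x (hleI x hx).1
    (hleI x hx).2) ⟨ha.1, le_rfl⟩ hda
  have hneg := isPreconnected_Ico.forall_pos_of_ne_zero (hu.continuousOn_du.mono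
    fun x hx => Ioo_subset_Icc_self (hriI x hx).1).neg (fun x hx => neg_ne_zero.2
    (hcrit x (hriI x hx).1 (hriI x hx).2)) ⟨le_rfl, hb.2⟩ (neg_pos.2 hdb)
  have hasc : G (u a) - G (u z) = 1 * (a - z) := sub_eq_mul_of_hasDerivAt hz.2.le fun x hx => by
    have hx' : x ∈ Ioc (-1) a := ⟨hz.1.trans_le hx.1, hx.2⟩
    simpa [abs_of_pos (hpos x hx'), (hpos x hx').ne'] using hG x (hleI x hx').1 (hleI x hx').2
  have hdesc : G (u c) - G (u b) = -1 * (c - b) := sub_eq_mul_of_hasDerivAt hc.1 fun x hx => by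
    have hx' : x ∈ Ico b 1 := ⟨hx.1, hx.2.trans_lt hc1⟩
    have hdx : du u x < 0 := neg_pos.1 (hneg x hx')
    simpa [abs_of_neg hdx, hdx.ne] using hG x (hriI x hx').1 (hriI x hx').2
  rw [hua] at hasc
  rw [hub, huc] at hdesc
  linarith

theorem du_lt_du {x y : ℝ} (hu : Sol1D p lam f u) (hp : 1 < p) (hlam : 0 < lam)
    (hx : -1 < x) (hxy : x < y) (hy : y < 1) (hf : ∀ z ∈ Ioo x y, f (u z) < 0) :
    du u x < du u y := by
  have hsub : Icc x y ⊆ Ioo (-1) 1 := Icc_subset_Ioo hx hy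
  have hmono : StrictMonoOn (fun z => phi p (du u z)) (Icc x y) :=
    strictMonoOn_of_deriv_pos (convex_Icc x y) (hu.reg'.continuousOn.mono hsub) fun z hz => by
      rw [interior_Icc] at hz
      rw [(hu.hasDerivAt_phi_du (hsub (Ioo_subset_Icc_self hz))).deriv, neg_pos]
      exact mul_neg_of_pos_of_neg hlam (hf z hz)
  exact (phi_strictMono hp).lt_iff_lt.1
    (hmono (left_mem_Icc.2 hxy.le) (right_mem_Icc.2 hxy.le) hxy)

theorem du_lt_slope {x₀ : ℝ} (hu : Sol1D p lam f u) (hp : 1 < p) (hlam : 0 < lam)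
    (hx₀ : x₀ ∈ Ioo (-1) 1) (hf : ∀ x ∈ Ioo x₀ 1, f (u x) < 0) :
    du u x₀ < (u 1 - u x₀) / (1 - x₀) := by
  obtain ⟨ξ, hξ, hslope⟩ := exists_hasDerivAt_eq_slope u (du u) hx₀.2
    (hu.reg.continuousOn.mono (Icc_subset_Icc hx₀.1.le le_rfl))
    fun x hx => hu.hasDerivAt ⟨hx₀.1.trans hx.1, hx.2⟩
  rw [← hslope]
  exact hu.du_lt_du hp hlam hx₀.1 hξ.1 hξ.2 fun z hz => hf z ⟨hz.1, hz.2.trans hξ.2⟩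

end Sol1D

theorem stmt16_general (p : ℝ) (hp : 1 < p) (lam : ℝ) (hlam : 0 < lam)
    (f : ℝ → ℝ) (hf : ContDiffOn ℝ 1 f (Set.Ici 0))
    (γ : ℝ)
    (hneg : ∀ v ∈ Set.Ioo (0:ℝ) γ, f v < 0)
    (u : ℝ → ℝ) (hu : Sol1D p lam f u)
    (x₀ : ℝ) (hx₀ : x₀ ∈ Set.Ioo (0:ℝ) 1) (hux₀ : u x₀ = γ) :
    (p - 1) * (1 - x₀) * phi p (du u x₀) + phi' p (du u x₀) * u x₀ < 0 := by
  have hfc := hf.continuousOn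
  have hx₀I : x₀ ∈ Ioo (-1) 1 := ⟨by linarith [hx₀.1], hx₀.2⟩
  set F : ℝ → ℝ := fun s => ∫ t in (0 : ℝ)..s, f t
  have hFd : ∀ s > 0, HasDerivAt F (f s) s := fun s hs =>
    hasDerivAt_integral_of_continuousOn (hfc.mono fun t ht => (le_inf le_rfl hs.le).trans ht.1)
      isOpen_Ioi hs (hfc.mono Ioi_subset_Ici_self)
  have hE : ∀ s ∈ Ioc 0 γ, lam * F s < energy p lam F u x₀ := fun s hs =>
    calc lam * F s < lam * F 0 := by
          simpa [F] using mul_neg_of_pos_of_neg hlam (intervalIntegral_neg_of_neg_on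
            (hfc.mono fun t ht => (le_inf le_rfl hs.1.le).trans ht.1).intervalIntegrable
            (fun t ht => hneg t ⟨ht.1, ht.2.trans_le hs.2⟩) hs.1)
      _ ≤ energy p lam F u x₀ := hu.energy_ge hp hFd (continuousWithinAt_integral_zero hfc) hx₀I
  have hcrit := hu.du_ne_zero hp hFd hx₀I hE
  rw [mul_phi_add_phi'_mul, hux₀]
  rcases (hcrit x₀ hx₀I hux₀.le).lt_or_gt with hd | hd
  · have hslope := hu.du_lt_slope hp hlam hx₀I fun x hx =>
      hneg _ ⟨hu.pos x ⟨hx₀I.1.trans hx.1, hx.2⟩, hu.lt_of_du_neg hcrit hx₀I hux₀ hd x hx⟩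
    rw [hu.bc1, hux₀, lt_div_iff₀ (by linarith [hx₀.2])] at hslope
    exact mul_neg_of_pos_of_neg (phi'_pos hp hd.ne) (by linarith)
  · obtain ⟨x₁, hx₁, hux₁, hdx₁, hright⟩ := hu.exists_last_crossing hcrit hx₀I hux₀
    have := hu.add_nonpos_of_crossings hp hFd hx₀I ⟨hx₀I.1.trans_le hx₁.1, hx₁.2⟩ hE hux₀ hux₁
      hd hdx₁ (hu.lt_of_du_pos hcrit hx₀I hux₀ hd) hright
    linarith [hx₀.1, hx₁.1]

/-- Lemma 3.6: `q(x₀) < 0` where `q(x) = (p-1)(1-x)φ_p(u'(x)) + φ_p'(u'(x))u(x)`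
and `u(x₀) = γ`. -/
theorem stmt16 (p : ℝ) (hp : 1 < p) (lam : ℝ) (hlam : 0 < lam)
    (f : ℝ → ℝ) (hf : ContDiffOn ℝ 1 f (Set.Ici 0))
    (γ : ℝ) (hγ : 0 < γ)
    (hneg : ∀ v ∈ Set.Ioo (0:ℝ) γ, f v < 0)
    (hpos : ∀ v > γ, 0 < f v)
    (u : ℝ → ℝ) (hu : Sol1D p lam f u)
    (x₀ : ℝ) (hx₀ : x₀ ∈ Set.Ioo (0:ℝ) 1) (hux₀ : u x₀ = γ) :
    (p - 1) * (1 - x₀) * phi p (du u x₀) + phi' p (du u x₀) * u x₀ < 0 :=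
  stmt16_general p hp lam hlam f hf γ hneg u hu x₀ hx₀ hux₀
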